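/- In the homotopy braid group B̂₃, with b₁₂, b₁₃, b₂₃ the images of σ₁², σ₂σ₁²σ₂^{-1}, σ₂² and z = [b₂₃, b₁₃], the following hold for every integer k: b₁₂^{-k} b₁₃ b₁₂^{k} = b₁₃ z^{k}, b₁₂^{-k} b₂₃ b₁₂^{k} = b₂₃ z^{-k}, and b₁₂^{-k} z b₁₂^{k} = z. -/

import Mathlib

/-- The commutator `[x, y] = x⁻¹ y⁻¹ x y` used in the paper. -/
def pcomm {G : Type*} [Group G] (x y : G) : G := x⁻¹ * y⁻¹ * x * y

/-- The braid relation `σ₁σ₂σ₁ = σ₂σ₁σ₂` on two generators. -/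
def braidRel3 : Set (FreeGroup (Fin 2)) :=
  { FreeGroup.of 0 * FreeGroup.of 1 * FreeGroup.of 0 *
      (FreeGroup.of 1 * FreeGroup.of 0 * FreeGroup.of 1)⁻¹ }

/-- The braid group `B₃`. -/
abbrev B3 := PresentedGroup braidRel3

/-- The generator `σ₁` of `B₃`. -/
def s1 : B3 := PresentedGroup.of 0
/-- The generator `σ₂` of `B₃`. -/
def s2 : B3 := PresentedGroup.of 1
/-- `a₁₂ = σ₁²`. -/
def a12 : B3 := s1 ^ 2
/-- `a₁₃ = σ₂σ₁²σ₂⁻¹`. -/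
def a13 : B3 := s2 * s1 ^ 2 * s2⁻¹
/-- `a₂₃ = σ₂²`. -/
def a23 : B3 := s2 ^ 2

/-- The homotopy relations in `B₃`: `[a₁₃, g⁻¹a₁₃g]` and `[a₂₃, g⁻¹a₂₃g]` for `g`
in the subgroup generated by `a₁₃` and `a₂₃`. -/
def homotopyRels3 : Set B3 :=
  { x | ∃ g ∈ Subgroup.closure {a13, a23},
        x = pcomm a13 (g⁻¹ * a13 * g) ∨ x = pcomm a23 (g⁻¹ * a23 * g) }

/-- The homotopy braid group `B̂₃`. -/
abbrev HB3 := B3 ⧸ Subgroup.normalClosure homotopyRels3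

/-- The canonical projection `B₃ → B̂₃`. -/
def pr : B3 →* HB3 := QuotientGroup.mk' _

/-- The image of `σ₁` in `B̂₃`. -/
def t1 : HB3 := pr s1
/-- The image of `σ₂` in `B̂₃`. -/
def t2 : HB3 := pr s2
/-- The image `b₁₂` of `a₁₂` in `B̂₃`. -/
def b12 : HB3 := pr a12
/-- The image `b₁₃` of `a₁₃` in `B̂₃`. -/
def b13 : HB3 := pr a13
/-- The image `b₂₃` of `a₂₃` in `B̂₃`. -/
def b23 : HB3 := pr a23
/-- `z = [b₂₃, b₁₃]`. -/
def zz : HB3 := pcomm b23 b13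

/-!
The square of the half twist `Δ = σ₁σ₂σ₁` is central in `B₃`, because conjugation by `Δ`
swaps `σ₁` and `σ₂`; and `a₁₂a₁₃a₂₃ = Δ²`. Hence conjugation by `b₁₂⁻¹` agrees with
conjugation by `b₁₃b₂₃` on all of `B̂₃`. The homotopy relations say that `b₁₃` commutes with
`b₂₃⁻¹b₁₃b₂₃` and `b₂₃` with `b₁₃⁻¹b₂₃b₁₃`, which makes `z` commute with `b₁₃` and `b₂₃`.
Conjugation by `b₁₃b₂₃` therefore sends `b₁₃ ↦ b₁₃z`, `b₂₃ ↦ b₂₃z⁻¹` and fixes `z`, which is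
the case `k = 1`; since `b₁₂` commutes with `z`, the case of arbitrary `k` follows.
-/

open scoped commutatorElement

section GroupLemmas

variable {G : Type*} [Group G]

theorem pcomm_eq_commutatorElement (x y : G) : pcomm x y = ⁅x⁻¹, y⁻¹⁆ := by
  simp [pcomm, commutatorElement_def]

theorem pcomm_eq_one_iff {x y : G} : pcomm x y = 1 ↔ Commute x y := by
  rw [pcomm_eq_commutatorElement, commutatorElement_eq_one_iff_commute, Commute.inv_inv_iff]

theorem map_pcomm {H : Type*} [Group H] (f : G →* H) (x y : G) :
    f (pcomm x y) = pcomm (f x) (f y) := by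
  simp only [pcomm, map_mul, map_inv]

theorem pcomm_inv (x y : G) : (pcomm x y)⁻¹ = pcomm y x := by
  simp only [pcomm]; group

theorem Commute.commute_pcomm_of_conj {a b : G} (h : Commute a (b⁻¹ * a * b)) :
    Commute (pcomm b a) a := by
  have : pcomm b a = (b⁻¹ * a * b)⁻¹ * a := by simp only [pcomm]; group
  rw [this]
  exact (h.symm.inv_left).mul_left (Commute.refl a)

theorem inv_mul_mul_eq_of_commute_mul {g h y : G} (hc : Commute (g * h) y) :
    g⁻¹ * y * g = h * y * h⁻¹ :=
  calc g⁻¹ * y * g = g⁻¹ * (y * (g * h)) * h⁻¹ := by group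
    _ = g⁻¹ * ((g * h) * y) * h⁻¹ := by rw [hc.eq]
    _ = h * y * h⁻¹ := by group

theorem zpow_neg_mul_mul_zpow_of_conj {g x z : G} (hx : g⁻¹ * x * g = x * z)
    (hz : Commute z g) (k : ℤ) : g ^ (-k) * x * g ^ k = x * z ^ k := by
  have hconj : x⁻¹ * g⁻¹ * x = z * g⁻¹ := by
    calc x⁻¹ * g⁻¹ * x = x⁻¹ * (g⁻¹ * x * g) * g⁻¹ := by group
      _ = z * g⁻¹ := by rw [hx]; group
  have hconj_zpow : x⁻¹ * g ^ (-k) * x = z ^ k * g ^ (-k) := by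
    have := conj_zpow (i := k) (a := x⁻¹) (b := g⁻¹)
    rw [inv_inv, hconj, hz.inv_right.mul_zpow, inv_zpow'] at this
    exact this.symm
  calc g ^ (-k) * x * g ^ k = x * (x⁻¹ * g ^ (-k) * x) * g ^ k := by group
    _ = x * z ^ k := by rw [hconj_zpow]; group

variable {a b : G}

theorem mul_mul_mul_inv_left (ha : Commute (pcomm b a) a) (hb : Commute (pcomm b a) b) :
    (a * b) * a * (a * b)⁻¹ = a * pcomm b a :=
  calc (a * b) * a * (a * b)⁻¹ = a * (a * (b * pcomm b a * b⁻¹) * a⁻¹) := by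
        simp only [pcomm]; group
    _ = a * pcomm b a := by rw [hb.symm.mul_inv_cancel, ha.symm.mul_inv_cancel]

theorem mul_mul_mul_inv_right (ha : Commute (pcomm b a) a) :
    (a * b) * b * (a * b)⁻¹ = b * (pcomm b a)⁻¹ :=
  calc (a * b) * b * (a * b)⁻¹ = b * (a * (pcomm b a)⁻¹ * a⁻¹) := by simp only [pcomm]; group
    _ = b * (pcomm b a)⁻¹ := by rw [ha.symm.inv_right.mul_inv_cancel]

end GroupLemmas

section BraidGroup

theorem s1_mul_s2_mul_s1 : s1 * s2 * s1 = s2 * s1 * s2 :=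
  PresentedGroup.mk_eq_mk_of_mul_inv_mem rfl

def halfTwist : B3 := s1 * s2 * s1

theorem halfTwist_mul_s1 : halfTwist * s1 = s2 * halfTwist := by
  simp only [halfTwist]
  conv_lhs => rw [s1_mul_s2_mul_s1]
  group

theorem halfTwist_mul_s2 : halfTwist * s2 = s1 * halfTwist := by
  conv_rhs => rw [halfTwist, s1_mul_s2_mul_s1]
  simp only [halfTwist]; group

theorem commute_halfTwist_sq (g : B3) : Commute (halfTwist ^ 2) g := by
  have hs1 : halfTwist ^ 2 * s1 = s1 * halfTwist ^ 2 := by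
    rw [pow_two, mul_assoc, halfTwist_mul_s1, ← mul_assoc, halfTwist_mul_s2, mul_assoc]
  have hs2 : halfTwist ^ 2 * s2 = s2 * halfTwist ^ 2 := by
    rw [pow_two, mul_assoc, halfTwist_mul_s2, ← mul_assoc, halfTwist_mul_s1, mul_assoc]
  refine (Subgroup.mem_centralizer_singleton_iff.mp
    (PresentedGroup.generated_by _ (Subgroup.centralizer {halfTwist ^ 2}) ?_ g)).symm
  intro j
  fin_cases j
  exacts [Subgroup.mem_centralizer_singleton_iff.mpr hs1.symm,
    Subgroup.mem_centralizer_singleton_iff.mpr hs2.symm]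

theorem a12_mul_a13_mul_a23 : a12 * a13 * a23 = halfTwist ^ 2 :=
  calc a12 * a13 * a23 = s1 * (s1 * s2 * s1) * s1 * s2 := by
        simp only [a12, a13, a23, pow_two]; group
    _ = s1 * (s2 * s1 * s2) * s1 * s2 := by rw [s1_mul_s2_mul_s1]
    _ = halfTwist * (s2 * s1 * s2) := by rw [halfTwist]; group
    _ = halfTwist ^ 2 := by rw [← s1_mul_s2_mul_s1, pow_two, halfTwist]

end BraidGroup

section HomotopyBraidGroup

theorem pr_eq_one_of_mem_homotopyRels3 {x : B3} (hx : x ∈ homotopyRels3) : pr x = 1 :=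
  (QuotientGroup.eq_one_iff _).mpr (Subgroup.subset_normalClosure hx)

theorem b13_commute_conj : Commute b13 (b23⁻¹ * b13 * b23) := by
  have h := pr_eq_one_of_mem_homotopyRels3
    ⟨a23, Subgroup.subset_closure (by simp), Or.inl rfl⟩
  rw [map_pcomm, map_mul, map_mul, map_inv, pcomm_eq_one_iff] at h
  exact h

theorem b23_commute_conj : Commute b23 (b13⁻¹ * b23 * b13) := by
  have h := pr_eq_one_of_mem_homotopyRels3
    ⟨a13, Subgroup.subset_closure (by simp), Or.inr rfl⟩
  rw [map_pcomm, map_mul, map_mul, map_inv, pcomm_eq_one_iff] at h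
  exact h

theorem zz_commute_b13 : Commute zz b13 := b13_commute_conj.commute_pcomm_of_conj

theorem zz_commute_b23 : Commute zz b23 := by
  have h := b23_commute_conj.commute_pcomm_of_conj
  rw [← pcomm_inv, Commute.inv_left_iff] at h
  exact h

theorem commute_b12_mul_b13_mul_b23 (y : HB3) : Commute (b12 * b13 * b23) y := by
  obtain ⟨g, rfl⟩ := QuotientGroup.mk'_surjective _ y
  have h : b12 * b13 * b23 = pr (halfTwist ^ 2) := by
    rw [← a12_mul_a13_mul_a23, map_mul, map_mul]; rfl
  rw [h]
  exact (commute_halfTwist_sq g).map pr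

theorem b12_inv_mul_mul_b12 (y : HB3) :
    b12⁻¹ * y * b12 = (b13 * b23) * y * (b13 * b23)⁻¹ :=
  inv_mul_mul_eq_of_commute_mul (by rw [← mul_assoc]; exact commute_b12_mul_b13_mul_b23 y)

theorem b12_inv_mul_b13_mul_b12 : b12⁻¹ * b13 * b12 = b13 * zz := by
  rw [b12_inv_mul_mul_b12]
  exact mul_mul_mul_inv_left zz_commute_b13 zz_commute_b23

theorem b12_inv_mul_b23_mul_b12 : b12⁻¹ * b23 * b12 = b23 * zz⁻¹ := by
  rw [b12_inv_mul_mul_b12]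
  exact mul_mul_mul_inv_right zz_commute_b13

theorem zz_commute_b12 : Commute zz b12 := by
  have h : b12⁻¹ * zz * b12 = zz := by
    rw [b12_inv_mul_mul_b12]
    exact (zz_commute_b13.mul_right zz_commute_b23).symm.mul_inv_cancel
  rw [mul_assoc] at h
  exact inv_mul_eq_iff_eq_mul.mp h

end HomotopyBraidGroup

/-- The action of `b₁₂` on `b₁₃`, `b₂₃` and `z` in `B̂₃`. -/
theorem b12_action (k : ℤ) :
    b12 ^ (-k) * b13 * b12 ^ k = b13 * zz ^ k ∧
    b12 ^ (-k) * b23 * b12 ^ k = b23 * zz ^ (-k) ∧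
    b12 ^ (-k) * zz * b12 ^ k = zz := by
  refine ⟨zpow_neg_mul_mul_zpow_of_conj b12_inv_mul_b13_mul_b12 zz_commute_b12 k, ?_, ?_⟩
  · rw [← inv_zpow' zz]
    exact zpow_neg_mul_mul_zpow_of_conj b12_inv_mul_b23_mul_b12 zz_commute_b12.inv_left k
  · rw [zpow_neg]
    exact (zz_commute_b12.zpow_right k).symm.inv_mul_cancel
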